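/- Let d ≥ 1, α ∈ [0,1) and r > 0. Then there is a constant C ≥ 1 (depending only on d, α, r) such that for every k ∈ ℤ^d∖{0} and every ξ ∈ B_k^r, one has C^{−1}·(1 + |ξ|)^α ≤ (λ(B_k^r))^{1/d} ≤ C·(1 + |ξ|)^α, where λ denotes d-dimensional Lebesgue measure; that is, (B_k^r)_{k∈ℤ^d∖{0}} satisfies the defining size condition of an α-covering. -/

import Mathlib

open MeasureTheory
open scoped ENNReal

/-- The integer lattice point `k ∈ ℤ^d` viewed as an element of `ℝ^d`. -/
noncomputable def intVec {d : ℕ} (k : Fin d → ℤ) : EuclideanSpace ℝ (Fin d) :=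
  (EuclideanSpace.equiv (Fin d) ℝ).symm (fun i => (k i : ℝ))

/-- The ball `B_k^r = {ξ ∈ ℝ^d : |ξ - |k|^{α₀} k| < r |k|^{α₀}}` with `α₀ = α/(1-α)`, a member of
the standard `α`-covering of the frequency space `ℝ^d`. -/
noncomputable def alphaBall (d : ℕ) (α r : ℝ) (k : Fin d → ℤ) :
    Set (EuclideanSpace ℝ (Fin d)) :=
  Metric.ball ((‖intVec k‖ ^ (α / (1 - α))) • intVec k) (r * ‖intVec k‖ ^ (α / (1 - α)))

/-!
Writing `c = |k|^{α₀} k`, one has `|c| = |k|^{1/(1-α)}` and `|c|^α = |k|^{α₀}`, so `B_k^r` is the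
ball `B(c, r|c|^α)` with `|c| ≥ 1`. Its volume to the power `1/d` is a fixed multiple of `|c|^α`,
and every `ξ` in it has `1 + |ξ|` comparable to `|c|`: from above since `|c|^α ≤ |c|`, from below
since `r|c|^α ≤ |c|/2` once `|c|^{1-α} ≥ 2r`, while the remaining `c` are bounded.
-/

open Metric Module

section BallInNormedGroup

variable {E : Type*} [SeminormedAddCommGroup E] {α r : ℝ} {c ξ : E}

lemma one_add_norm_le_of_mem_ball_rpow (hα1 : α ≤ 1) (hr : 0 ≤ r)
    (hc : 1 ≤ ‖c‖) (hξ : ξ ∈ ball c (r * ‖c‖ ^ α)) : 1 + ‖ξ‖ ≤ (2 + r) * ‖c‖ := by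
  have hcα : ‖c‖ ^ α ≤ ‖c‖ := Real.rpow_le_self_of_one_le hc hα1
  have hdist : ‖ξ‖ - ‖c‖ < r * ‖c‖ ^ α :=
    (norm_sub_norm_le ξ c).trans_lt (mem_ball_iff_norm.mp hξ)
  nlinarith

lemma norm_le_mul_one_add_norm_of_mem_ball_rpow (hα1 : α < 1) (hr : 0 ≤ r)
    (hξ : ξ ∈ ball c (r * ‖c‖ ^ α)) :
    ‖c‖ ≤ max 2 ((2 * r) ^ (1 - α)⁻¹) * (1 + ‖ξ‖) := by
  set K := max 2 ((2 * r) ^ (1 - α)⁻¹)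
  have hK : 2 ≤ K := le_max_left _ _
  rcases le_or_gt ‖c‖ ((2 * r) ^ (1 - α)⁻¹) with hsmall | hlarge
  · nlinarith [le_max_right 2 ((2 * r) ^ (1 - α)⁻¹), norm_nonneg ξ]
  · have hc0 : 0 < ‖c‖ := (Real.rpow_nonneg (by linarith) _).trans_lt hlarge
    have h2r : 2 * r < ‖c‖ ^ (1 - α) := by
      have := Real.rpow_lt_rpow (z := 1 - α) (Real.rpow_nonneg (by linarith) _) hlarge (by linarith)
      rwa [← Real.rpow_mul (by linarith), inv_mul_cancel₀ (by linarith), Real.rpow_one] at this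
    have hsplit : ‖c‖ = ‖c‖ ^ (1 - α) * ‖c‖ ^ α := by
      rw [← Real.rpow_add hc0, sub_add_cancel, Real.rpow_one]
    have hrad : 2 * (r * ‖c‖ ^ α) ≤ ‖c‖ := by
      nlinarith [Real.rpow_nonneg hc0.le α]
    have hdist : ‖c‖ - ‖ξ‖ < r * ‖c‖ ^ α := by
      exact (norm_sub_norm_le c ξ).trans_lt (mem_ball_iff_norm'.mp hξ)
    nlinarith [norm_nonneg ξ]

end BallInNormedGroup

lemma rpow_inv_finrank_measure_ball {E : Type*} [NormedAddCommGroup E] [NormedSpace ℝ E]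
    [MeasurableSpace E] [BorelSpace E] [FiniteDimensional ℝ E] (μ : Measure E)
    [μ.IsAddHaarMeasure] [Nontrivial E] (x : E) {ρ : ℝ} (hρ : 0 ≤ ρ) :
    (μ (ball x ρ)).toReal ^ (1 / (finrank ℝ E : ℝ)) =
      ρ * (μ (ball 0 1)).toReal ^ (1 / (finrank ℝ E : ℝ)) := by
  have hd : (finrank ℝ E : ℝ) ≠ 0 := Nat.cast_ne_zero.mpr finrank_pos.ne'
  rw [Measure.addHaar_ball μ x hρ, ENNReal.toReal_mul, ENNReal.toReal_ofReal (by positivity),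
    Real.mul_rpow (by positivity) ENNReal.toReal_nonneg, ← Real.rpow_natCast,
    ← Real.rpow_mul hρ, mul_one_div_cancel hd, Real.rpow_one]

lemma one_le_norm_intVec {d : ℕ} {k : Fin d → ℤ} (hk : k ≠ 0) : 1 ≤ ‖intVec k‖ := by
  obtain ⟨i, hi⟩ := Function.ne_iff.mp hk
  calc (1 : ℝ) ≤ |(k i : ℝ)| := by exact_mod_cast Int.one_le_abs hi
    _ = ‖intVec k i‖ := rfl
    _ ≤ ‖intVec k‖ := PiLp.norm_apply_le (intVec k) i

lemma exists_alphaBall_eq_ball {d : ℕ} {α : ℝ} (hα1 : α < 1) (r : ℝ) {k : Fin d → ℤ}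
    (hk : k ≠ 0) :
    ∃ c : EuclideanSpace ℝ (Fin d), 1 ≤ ‖c‖ ∧ alphaBall d α r k = ball c (r * ‖c‖ ^ α) := by
  set n := ‖intVec k‖
  have hn : 1 ≤ n := one_le_norm_intVec hk
  have h1α : 1 - α ≠ 0 := by linarith
  have hnorm : ‖n ^ (α / (1 - α)) • intVec k‖ = n ^ (1 - α)⁻¹ := by
    rw [norm_smul, Real.norm_of_nonneg (by positivity), ← Real.rpow_add_one (by positivity)]
    congr 1
    field_simp
    ring
  refine ⟨n ^ (α / (1 - α)) • intVec k, ?_, ?_⟩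
  · rw [hnorm]
    exact Real.one_le_rpow hn (inv_nonneg.mpr (by linarith))
  · rw [hnorm, ← Real.rpow_mul (by positivity), inv_mul_eq_div]
    rfl

/-- For `d ≥ 1`, `α ∈ [0,1)` and `r > 0`, there is a constant `C ≥ 1`
(depending only on `d, α, r`) such that for every `k ∈ ℤ^d∖{0}` and every `ξ ∈ B_k^r`,
`C⁻¹ (1 + |ξ|)^α ≤ λ(B_k^r)^{1/d} ≤ C (1 + |ξ|)^α`, where `λ` is `d`-dimensional Lebesgue
measure; i.e., `(B_k^r)_k` satisfies the size condition defining an `α`-covering. -/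
theorem alpha_covering_size_condition
    {d : ℕ} (hd : 1 ≤ d) (α : ℝ) (hα0 : 0 ≤ α) (hα1 : α < 1) (r : ℝ) (hr : 0 < r) :
    ∃ C : ℝ, 1 ≤ C ∧ ∀ k : Fin d → ℤ, k ≠ 0 → ∀ ξ ∈ alphaBall d α r k,
      C⁻¹ * (1 + ‖ξ‖) ^ α ≤ ((volume (alphaBall d α r k)).toReal) ^ (1 / (d : ℝ)) ∧
      ((volume (alphaBall d α r k)).toReal) ^ (1 / (d : ℝ)) ≤ C * (1 + ‖ξ‖) ^ α := by
  have : Nonempty (Fin d) := ⟨⟨0, hd⟩⟩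
  set v := (volume (ball (0 : EuclideanSpace ℝ (Fin d)) 1)).toReal ^ (1 / (d : ℝ))
  have hv : 0 < v := Real.rpow_pos_of_pos (ENNReal.toReal_pos
    (measure_ball_pos volume _ one_pos).ne' measure_ball_lt_top.ne) _
  set K := max 2 ((2 * r) ^ (1 - α)⁻¹)
  set C := max 1 (max ((2 + r) ^ α / (r * v)) (r * v * K ^ α))
  refine ⟨C, le_max_left _ _, fun k hk ξ hξ => ?_⟩
  obtain ⟨c, hc, hball⟩ := exists_alphaBall_eq_ball hα1 r hk
  rw [hball] at hξ ⊢
  have hvol := rpow_inv_finrank_measure_ball volume c (by positivity : 0 ≤ r * ‖c‖ ^ α)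
  rw [finrank_euclideanSpace_fin] at hvol
  have hup : (1 + ‖ξ‖) ^ α ≤ (2 + r) ^ α * ‖c‖ ^ α := by
    rw [← Real.mul_rpow (by linarith) (by positivity)]
    exact Real.rpow_le_rpow (by positivity)
      (one_add_norm_le_of_mem_ball_rpow hα1.le hr.le hc hξ) hα0
  have hlow : ‖c‖ ^ α ≤ K ^ α * (1 + ‖ξ‖) ^ α := by
    rw [← Real.mul_rpow (by positivity) (by positivity)]
    exact Real.rpow_le_rpow (norm_nonneg c)
      (norm_le_mul_one_add_norm_of_mem_ball_rpow hα1 hr.le hξ) hα0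
  rw [hvol, mul_right_comm]
  constructor
  · rw [inv_mul_le_iff₀ (by positivity)]
    calc (1 + ‖ξ‖) ^ α ≤ (2 + r) ^ α / (r * v) * (r * v * ‖c‖ ^ α) := by
          rwa [← mul_assoc, div_mul_cancel₀ _ (by positivity)]
      _ ≤ C * (r * v * ‖c‖ ^ α) := by gcongr; exact (le_max_left _ _).trans (le_max_right _ _)
  · calc r * v * ‖c‖ ^ α ≤ r * v * K ^ α * (1 + ‖ξ‖) ^ α := by rw [mul_assoc _ (K ^ α)]; gcongr
      _ ≤ C * (1 + ‖ξ‖) ^ α := by gcongr; exact (le_max_right _ _).trans (le_max_right _ _)
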